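/- arXiv:math/0306410 — 5 statements merged into one kernel-verified Lean document; each statement's English description precedes it below -/
import Mathlib

section
/- The group GL_d(ℚ) is generated, as a group, by GL_d(ℤ) together with all diagonal matrices diag(1, …, 1, n, 1, …, 1) where n is a positive integer placed in one diagonal position and all other diagonal entries equal 1. -/
/-!
Invertible matrices over a field are generated by invertible diagonal matrices and transvections.
An invertible diagonal matrix over `ℚ` is a product of matrices `diag(1, …, q, …, 1)`, and each
`q ∈ ℚˣ` is `± a / b` with `a, b` positive integers, where `diag(1, …, -1, …, 1) ∈ GL_d(ℤ)`.
The transvection with entry `a / b` at `(i, j)` is the conjugate of the integral transvection with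
entry `a` by `diag(1, …, b, …, 1)`, with `b` in position `j`.
-/

theorem Rat.eq_top_of_neg_one_mem_of_natCast_mem {K : Subgroup ℚˣ} (hneg : -1 ∈ K)
    (hnat : ∀ (u : ℚˣ) (m : ℕ), (u : ℚ) = m → u ∈ K) : K = ⊤ := by
  have hint (u : ℚˣ) (z : ℤ) (hu : (u : ℚ) = z) : u ∈ K := by
    obtain ⟨m, rfl | rfl⟩ := Int.eq_nat_or_neg z
    · exact hnat u m (by exact_mod_cast hu)
    · simpa using mul_mem hneg (hnat (-u) m (by simp [hu]))
  refine eq_top_iff.2 fun u _ ↦ ?_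
  let d : ℚˣ := Units.mk0 (u : ℚ).den (by simp)
  have hd : d ∈ K := hnat d _ rfl
  exact (mul_mem_cancel_right hd).1 (hint (u * d) (u : ℚ).num (Rat.mul_den_eq_num _))

namespace Matrix

variable {n : Type*} [Fintype n] [DecidableEq n] {R S : Type*} [CommRing R] [CommRing S]

def TransvectionStruct.toGL (t : TransvectionStruct n R) : GL n R :=
  ⟨t.toMatrix, t.inv.toMatrix, t.mul_inv, t.inv_mul⟩

namespace GeneralLinearGroup

def ofDiagonal : (n → Rˣ) →* GL n R :=
  (Units.map (diagonalRingHom n R).toMonoidHom).comp MulEquiv.piUnits.symm.toMonoidHom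

lemma coe_ofDiagonal (v : n → Rˣ) : (ofDiagonal v : Matrix n n R) = diagonal fun i ↦ (v i : R) :=
  rfl

lemma map_ofDiagonal (f : R →+* S) (v : n → Rˣ) :
    map f (ofDiagonal v) = ofDiagonal (Units.map f ∘ v) := by
  ext : 1
  simp [map, coe_ofDiagonal, diagonal_map]

lemma map_transvection_toGL (f : R →+* S) (i j : n) (hij : i ≠ j) (c : R) :
    map f (⟨i, j, hij, c⟩ : TransvectionStruct n R).toGL =
      (⟨i, j, hij, f c⟩ : TransvectionStruct n S).toGL := by
  ext a b
  simp [map, TransvectionStruct.toGL, transvection, one_apply, single_apply, apply_ite f]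

lemma ofDiagonal_mul_transvection_toGL_mul_inv (v : n → Rˣ) (i j : n) (hij : i ≠ j) (c : R) :
    ofDiagonal v * (⟨i, j, hij, c⟩ : TransvectionStruct n R).toGL * (ofDiagonal v)⁻¹ =
      (⟨i, j, hij, v i * c * ↑(v j)⁻¹⟩ : TransvectionStruct n R).toGL := by
  rw [← map_inv]
  ext a b
  simp only [coe_mul, coe_ofDiagonal, TransvectionStruct.toGL, TransvectionStruct.toMatrix_mk,
    mul_diagonal, diagonal_mul, transvection, add_apply, one_apply, single_apply, Pi.inv_apply]
  split_ifs <;> simp_all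

theorem eq_top_of_ofDiagonal_mem_of_transvection_toGL_mem {K : Type*} [Field K]
    {H : Subgroup (GL n K)} (hdiag : ∀ v, ofDiagonal v ∈ H)
    (htrans : ∀ t : TransvectionStruct n K, t.toGL ∈ H) : H = ⊤ := by
  refine eq_top_iff.2 fun A _ ↦ ?_
  suffices ∃ B ∈ H, (B : Matrix n n K) = A by
    obtain ⟨B, hB, hBA⟩ := this
    rwa [Units.ext hBA] at hB
  refine diagonal_transvection_induction_of_det_ne_zero (fun M ↦ ∃ B ∈ H, (B : Matrix n n K) = M)
    A (det_ne_zero A) (fun D hD ↦ ?_) (fun t ↦ ⟨t.toGL, htrans t, rfl⟩) ?_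
  · have hD' : ∀ i, D i ≠ 0 := by simpa [Finset.prod_ne_zero_iff] using hD
    exact ⟨ofDiagonal fun i ↦ Units.mk0 (D i) (hD' i), hdiag _, rfl⟩
  · rintro _ _ - - ⟨B, hB, rfl⟩ ⟨C, hC, rfl⟩
    exact ⟨B * C, mul_mem hB hC, rfl⟩

section Rat

variable {H : Subgroup (GL n ℚ)}

theorem ofDiagonal_mulSingle_mem (hint : ∀ A : GL n ℤ, map (Int.castRingHom ℚ) A ∈ H)
    (hnat : ∀ j (u : ℚˣ) (m : ℕ), (u : ℚ) = m → ofDiagonal (Pi.mulSingle j u) ∈ H)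
    (j : n) (u : ℚˣ) : ofDiagonal (Pi.mulSingle j u) ∈ H := by
  let K := H.comap (ofDiagonal.comp (MonoidHom.mulSingle _ j))
  have hneg : -1 ∈ K := by
    have hcomp : Units.map (Int.castRingHom ℚ : ℤ →* ℚ) ∘ Pi.mulSingle j (-1) =
        Pi.mulSingle j (-1) := by
      funext k
      by_cases hk : k = j <;> simp [hk]
    have hmap := hint (ofDiagonal (Pi.mulSingle j (-1)))
    rwa [map_ofDiagonal, hcomp] at hmap
  have hK : K = ⊤ := Rat.eq_top_of_neg_one_mem_of_natCast_mem hneg fun u m hu ↦ hnat j u m hu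
  exact (hK ▸ Subgroup.mem_top u : u ∈ K)

theorem ofDiagonal_mem (hint : ∀ A : GL n ℤ, map (Int.castRingHom ℚ) A ∈ H)
    (hnat : ∀ j (u : ℚˣ) (m : ℕ), (u : ℚ) = m → ofDiagonal (Pi.mulSingle j u) ∈ H)
    (v : n → ℚˣ) : ofDiagonal v ∈ H := by
  show v ∈ H.comap ofDiagonal
  rw [← Finset.univ_prod_mulSingle v]
  exact Subgroup.prod_mem _ fun j _ ↦ ofDiagonal_mulSingle_mem hint hnat j (v j)

theorem transvection_toGL_mem (hint : ∀ A : GL n ℤ, map (Int.castRingHom ℚ) A ∈ H)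
    (hnat : ∀ j (u : ℚˣ) (m : ℕ), (u : ℚ) = m → ofDiagonal (Pi.mulSingle j u) ∈ H)
    (t : TransvectionStruct n ℚ) : t.toGL ∈ H := by
  obtain ⟨i, j, hij, c⟩ := t
  let v : n → ℚˣ := Pi.mulSingle j (Units.mk0 c.den (by simp))
  have hc : (v i : ℚ) * c.num * ↑(v j)⁻¹ = c := by
    simpa [v, hij, div_eq_mul_inv] using Rat.num_div_den c
  have hconj := ofDiagonal_mul_transvection_toGL_mul_inv v i j hij c.num
  rw [hc] at hconj
  have hnum := hint (⟨i, j, hij, c.num⟩ : TransvectionStruct n ℤ).toGL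
  rw [map_transvection_toGL, eq_intCast] at hnum
  exact hconj ▸ mul_mem (mul_mem (ofDiagonal_mem hint hnat v) hnum)
    (inv_mem (ofDiagonal_mem hint hnat v))

theorem eq_top_of_map_int_mem_of_natCast_mem
    (hint : ∀ A : GL n ℤ, map (Int.castRingHom ℚ) A ∈ H)
    (hnat : ∀ j (u : ℚˣ) (m : ℕ), (u : ℚ) = m → ofDiagonal (Pi.mulSingle j u) ∈ H) : H = ⊤ :=
  eq_top_of_ofDiagonal_mem_of_transvection_toGL_mem (ofDiagonal_mem hint hnat)
    (transvection_toGL_mem hint hnat)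

end Rat

end GeneralLinearGroup

end Matrix

open Matrix.GeneralLinearGroup in
theorem stmt_2 (d : ℕ) :
    Subgroup.closure
      ({ A : (Matrix (Fin d) (Fin d) ℚ)ˣ |
          ∃ B : (Matrix (Fin d) (Fin d) ℤ)ˣ,
            Units.map (Int.castRingHom ℚ).mapMatrix.toMonoidHom B = A } ∪
       { A : (Matrix (Fin d) (Fin d) ℚ)ˣ |
          ∃ (j : Fin d) (n : ℕ), 0 < n ∧
            (A : Matrix (Fin d) (Fin d) ℚ) =
              Matrix.diagonal (fun i => if i = j then (n : ℚ) else 1) }) = ⊤ := by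
  refine eq_top_of_map_int_mem_of_natCast_mem (fun A ↦ Subgroup.subset_closure (.inl ⟨A, rfl⟩))
    fun j u m hu ↦ Subgroup.subset_closure (.inr ⟨j, m, ?_, ?_⟩)
  · exact Nat.pos_of_ne_zero fun h ↦ u.ne_zero (by simp [hu, h])
  · simp [coe_ofDiagonal, Pi.mulSingle_apply, apply_ite, hu]
end

section
/- Let θ ∈ ℝ be irrational. Then for every ε > 0 there exists a positive integer n such that dist(nθ, ℤ) < ε and dist(n²θ, ℤ) < ε. -/
/-!
In a compact normed abelian group, call `z` a quadratic limit of `x` if there are `n > 0` with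
`n • x` arbitrarily close to `0` and `n ^ 2 • x` arbitrarily close to `z`. Compactness and
Dirichlet's principle (some `n • x` with `n > 0` is close to `0`) give a quadratic limit, and the
quadratic limits are closed under addition: take `n` for `z`, then `m` for `w` so good that the
cross term `2nm • x` of `(n + m) ^ 2 • x` is negligible. Hence with `z` all positive multiples
`k • z` are quadratic limits; by Dirichlet again one of them is close to `0`, so `0` is a quadratic
limit. For `x = θ` in `ℝ / ℤ` this is the claim.
-/

open Filter Topology

section QuadraticLimits

variable {G : Type*} [SeminormedAddCommGroup G]

theorem exists_pos_nsmul_norm_lt [CompactSpace G] (x : G) {δ : ℝ} (hδ : 0 < δ) :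
    ∃ n : ℕ, 0 < n ∧ ‖n • x‖ < δ := by
  obtain ⟨a, -, φ, hφ, hconv⟩ := isCompact_univ.tendsto_subseq (x := fun k : ℕ => k • x)
    fun _ => Set.mem_univ _
  obtain ⟨N, hN⟩ := Metric.cauchySeq_iff.mp hconv.cauchySeq δ hδ
  have hlt : φ N < φ (N + 1) := hφ N.lt_succ_self
  refine ⟨φ (N + 1) - φ N, by omega, ?_⟩
  rw [sub_nsmul x hlt.le, ← sub_eq_add_neg, ← dist_eq_norm]
  exact hN _ N.le_succ _ le_rfl

theorem exists_seq_pos_nsmul_tendsto_zero [CompactSpace G] (x : G) :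
    ∃ n : ℕ → ℕ, (∀ k, 0 < n k) ∧ Tendsto (fun k => n k • x) atTop (𝓝 0) := by
  choose n hn hlt using fun k : ℕ => exists_pos_nsmul_norm_lt x (Nat.one_div_pos_of_nat (n := k))
  exact ⟨n, hn, squeeze_zero_norm (fun k => (hlt k).le) tendsto_one_div_add_atTop_nhds_zero_nat⟩

def quadraticLimits (x : G) : Set G :=
  {z | ∀ δ > 0, ∃ n : ℕ, 0 < n ∧ ‖n • x‖ < δ ∧ ‖n ^ 2 • x - z‖ < δ}

theorem quadraticLimits_nonempty [CompactSpace G] (x : G) : (quadraticLimits x).Nonempty := by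
  obtain ⟨n, hn, hlim⟩ := exists_seq_pos_nsmul_tendsto_zero x
  obtain ⟨z, -, φ, hφ, hconv⟩ := isCompact_univ.tendsto_subseq (x := fun k => n k ^ 2 • x)
    fun _ => Set.mem_univ _
  refine ⟨z, fun δ hδ => ?_⟩
  have hlin := (hlim.comp hφ.tendsto_atTop).eventually (Metric.ball_mem_nhds 0 hδ)
  have hquad := hconv.eventually (Metric.ball_mem_nhds z hδ)
  obtain ⟨k, hk₁, hk₂⟩ := (hlin.and hquad).exists
  exact ⟨n (φ k), hn _, by simpa using hk₁, by simpa [dist_eq_norm] using hk₂⟩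

theorem add_mem_quadraticLimits {x z w : G} (hz : z ∈ quadraticLimits x)
    (hw : w ∈ quadraticLimits x) : z + w ∈ quadraticLimits x := by
  intro δ hδ
  obtain ⟨n, hn, hn₁, hn₂⟩ := hz (δ / 2) (half_pos hδ)
  set η := δ / (2 * (2 * n + 1)) with hη
  have hη₀ : 0 < η := by positivity
  obtain ⟨m, -, hm₁, hm₂⟩ := hw η hη₀
  have hηδ : (2 * n + 1) * η = δ / 2 := by rw [hη]; field_simp
  have hcross : ‖(2 * n) • m • x‖ ≤ 2 * n * η := by
    refine norm_nsmul_le.trans ?_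
    push_cast
    gcongr
  refine ⟨n + m, by omega, ?_, ?_⟩
  · calc ‖(n + m) • x‖ ≤ ‖n • x‖ + ‖m • x‖ := by rw [add_nsmul]; exact norm_add_le _ _
      _ < δ / 2 + η := add_lt_add hn₁ hm₁
      _ ≤ δ / 2 + (2 * n + 1) * η := by gcongr; exact le_mul_of_one_le_left hη₀.le (by linarith)
      _ = δ := by rw [hηδ]; ring
  · have hsplit : (n + m) ^ 2 • x - (z + w) =
        (n ^ 2 • x - z) + (m ^ 2 • x - w) + (2 * n) • m • x := by
      rw [← mul_nsmul', show (n + m) ^ 2 = n ^ 2 + m ^ 2 + 2 * n * m by ring, add_nsmul, add_nsmul]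
      abel
    calc ‖(n + m) ^ 2 • x - (z + w)‖
        ≤ ‖n ^ 2 • x - z‖ + ‖m ^ 2 • x - w‖ + ‖(2 * n) • m • x‖ := by
          rw [hsplit]; exact norm_add₃_le
      _ < δ / 2 + η + 2 * n * η := add_lt_add_of_lt_of_le (add_lt_add hn₂ hm₂) hcross
      _ = δ := by linarith

theorem nsmul_mem_quadraticLimits {x z : G} (hz : z ∈ quadraticLimits x) :
    ∀ k : ℕ, 0 < k → k • z ∈ quadraticLimits x := by
  refine Nat.le_induction (by simpa using hz) fun k _ hk => ?_
  rw [succ_nsmul]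
  exact add_mem_quadraticLimits hk hz

theorem zero_mem_quadraticLimits [CompactSpace G] (x : G) : 0 ∈ quadraticLimits x := by
  intro δ hδ
  obtain ⟨z, hz⟩ := quadraticLimits_nonempty x
  obtain ⟨k, hk, hkz⟩ := exists_pos_nsmul_norm_lt z (half_pos hδ)
  obtain ⟨n, hn, hn₁, hn₂⟩ := nsmul_mem_quadraticLimits hz k hk (δ / 2) (half_pos hδ)
  refine ⟨n, hn, hn₁.trans (half_lt_self hδ), ?_⟩
  calc ‖n ^ 2 • x - 0‖ ≤ ‖n ^ 2 • x - k • z‖ + ‖k • z‖ := by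
        rw [sub_zero]; exact norm_le_norm_sub_add _ _
    _ < δ := by linarith

end QuadraticLimits

theorem UnitAddCircle.norm_coe_lt_iff {x ε : ℝ} :
    ‖(x : UnitAddCircle)‖ < ε ↔ ∃ m : ℤ, |x - m| < ε := by
  rw [UnitAddCircle.norm_eq]
  exact ⟨fun h => ⟨round x, h⟩, fun ⟨m, hm⟩ => (round_le x m).trans_lt hm⟩

theorem stmt_3_general (θ : ℝ) :
    ∀ ε : ℝ, 0 < ε → ∃ n : ℕ, 0 < n ∧
      (∃ m : ℤ, |(n : ℝ) * θ - m| < ε) ∧ (∃ m : ℤ, |(n : ℝ) ^ 2 * θ - m| < ε) := by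
  intro ε hε
  obtain ⟨n, hn, hlin, hquad⟩ := zero_mem_quadraticLimits (θ : UnitAddCircle) ε hε
  rw [sub_zero] at hquad
  rw [← AddCircle.coe_nsmul, nsmul_eq_mul, UnitAddCircle.norm_coe_lt_iff] at hlin hquad
  push_cast at hquad
  exact ⟨n, hn, hlin, hquad⟩

theorem stmt_3 (θ : ℝ) (hθ : Irrational θ) :
    ∀ ε : ℝ, 0 < ε → ∃ n : ℕ, 0 < n ∧
      (∃ m : ℤ, |(n : ℝ) * θ - m| < ε) ∧ (∃ m : ℤ, |(n : ℝ) ^ 2 * θ - m| < ε) :=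
  stmt_3_general θ
end

section
/- Let θ be a skew-symmetric real d×d matrix and define σ : ℤ^d → (S¹)^d by σ(n)_j = exp(2πi(θn)_j) for 1 ≤ j ≤ d. Then σ has dense range in the torus (S¹)^d if and only if θ is nondegenerate. -/
/-!
The characters `z ↦ ∏ j, z j ^ x j` of the torus take the value `exp (2πi ⟪x, θ y⟫)` at `σ y`, so
nondegeneracy of `θ` says exactly that no nontrivial character is trivial on the subgroup `σ(ℤᵈ)`.
A character trivial on a dense subgroup is trivial by continuity. Conversely, let `K` be the
closure of that subgroup. By invariance, the Haar probability of `K` (pushed to the torus) and the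
Haar probability of the torus both integrate a character to `1` or `0` according as it is trivial
or not, and characters span a dense subspace of `C(𝕋ᵈ, ℂ)` by Stone–Weierstrass; so the two
measures integrate every continuous function alike. Testing them against a Urysohn function that
vanishes on `K` shows that `K` is the whole torus.
-/

open MeasureTheory Measure Set Submodule Real

section ContinuousMapIntegral

variable {X E 𝕜 : Type*} [TopologicalSpace X] [CompactSpace X] [MeasurableSpace X]
  [OpensMeasurableSpace X] [NormedAddCommGroup E]

lemma ContinuousMap.integrable (μ : Measure X) [IsFiniteMeasure μ] (f : C(X, E)) :
    Integrable f μ :=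
  f.continuous.integrable_of_hasCompactSupport (.of_compactSpace _)

variable [NormedSpace ℝ E] [NormedDivisionRing 𝕜] [Module 𝕜 E] [NormSMulClass 𝕜 E]
  [SMulCommClass ℝ 𝕜 E]

variable (𝕜) in
noncomputable def ContinuousMap.integralCLM (μ : Measure X) [IsFiniteMeasure μ] :
    C(X, E) →L[𝕜] E :=
  LinearMap.mkContinuous
    { toFun f := ∫ x, f x ∂μ
      map_add' f g := integral_add (f.integrable μ) (g.integrable μ)
      map_smul' c f := integral_smul c f }
    (μ.real univ)
    fun f => by
      rw [mul_comm]
      exact norm_integral_le_of_norm_le_const (.of_forall f.norm_coe_le_norm)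

lemma integral_eq_of_dense_span {μ ν : Measure X} [IsFiniteMeasure μ] [IsFiniteMeasure ν]
    {s : Set C(X, E)} (hs : Dense (span 𝕜 s : Set C(X, E)))
    (h : ∀ f ∈ s, ∫ x, f x ∂μ = ∫ x, f x ∂ν) (f : C(X, E)) :
    ∫ x, f x ∂μ = ∫ x, f x ∂ν :=
  congr($(ContinuousLinearMap.ext_on hs (f := ContinuousMap.integralCLM 𝕜 μ)
    (g := ContinuousMap.integralCLM 𝕜 ν) h) f)

end ContinuousMapIntegral

lemma integral_eq_zero_of_map_mul {G 𝕜 : Type*} [Group G] [MeasurableSpace G] [MeasurableMul G]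
    [RCLike 𝕜] (μ : Measure G) [μ.IsMulLeftInvariant] {χ : G → 𝕜}
    (hχ : ∀ a b, χ (a * b) = χ a * χ b) {g : G} (hg : χ g ≠ 1) :
    ∫ x, χ x ∂μ = 0 := by
  have : χ g * ∫ x, χ x ∂μ = ∫ x, χ x ∂μ := by
    rw [← integral_const_mul, ← integral_mul_left_eq_self χ g]
    simp only [hχ]
  exact eq_zero_of_mul_eq_self_left hg this

lemma isProbabilityMeasure_haarMeasure_top {G : Type*} [Group G] [TopologicalSpace G]
    [IsTopologicalGroup G] [CompactSpace G] [MeasurableSpace G] [BorelSpace G] :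
    IsProbabilityMeasure (haarMeasure (⊤ : TopologicalSpace.PositiveCompacts G)) :=
  ⟨haarMeasure_self⟩

lemma IsClosed.eq_univ_of_forall_integral_eq {X : Type*} [TopologicalSpace X] [CompactSpace X]
    [T2Space X] [MeasurableSpace X] [BorelSpace X] {C : Set X} (hC : IsClosed C)
    {ν μ : Measure X} [IsFiniteMeasure μ] [μ.IsOpenPosMeasure] (hν : ν Cᶜ = 0)
    (h : ∀ f : C(X, ℝ), ∫ x, f x ∂ν = ∫ x, f x ∂μ) : C = univ := by
  by_contra hne
  obtain ⟨w, hw⟩ := (ne_univ_iff_exists_notMem C).mp hne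
  obtain ⟨f, hfC, hfw, hf01⟩ := exists_continuous_zero_one_of_isClosed hC isClosed_singleton
    (disjoint_singleton_right.mpr hw)
  have hν0 : ∫ x, f x ∂ν = 0 :=
    integral_eq_zero_of_ae (measure_mono_null (fun x hx => fun hxC => hx (hfC hxC)) hν)
  have hμpos : 0 < ∫ x, f x ∂μ :=
    integral_pos_of_integrable_nonneg_nonzero f.continuous (f.integrable μ) (fun x => (hf01 x).1)
      (x := w) (by simp [hfw rfl])
  exact hμpos.ne' (h f ▸ hν0)

theorem Subgroup.dense_iff_forall_eq_one {G ι : Type*} [Group G] [TopologicalSpace G]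
    [IsTopologicalGroup G] [CompactSpace G] [T2Space G] (χ : ι → C(G, ℂ))
    (hχ : ∀ i a b, χ i (a * b) = χ i a * χ i b) (hχ_dense : Dense (span ℂ (range χ) : Set C(G, ℂ)))
    (H : Subgroup G) :
    Dense (H : Set G) ↔ ∀ i, (∀ h ∈ H, χ i h = 1) → χ i = 1 := by
  refine ⟨fun hH i hi => ContinuousMap.ext <| congr_fun <|
    (χ i).continuous.ext_on hH continuous_const hi, fun hH => ?_⟩
  borelize G
  set K := H.topologicalClosure
  have hK : IsClosed (K : Set G) := H.isClosed_topologicalClosure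
  have : CompactSpace K := isCompact_iff_compactSpace.mp hK.isCompact
  borelize ↥K
  have := isProbabilityMeasure_haarMeasure_top (G := K)
  have := isProbabilityMeasure_haarMeasure_top (G := G)
  have hval : Measurable (Subtype.val : K → G) := continuous_subtype_val.measurable
  set ν : Measure G := (haarMeasure ⊤ : Measure K).map Subtype.val
  have hν : ∀ f : C(G, ℂ), ∫ g, f g ∂ν = ∫ g, f g ∂haarMeasure ⊤ := by
    refine integral_eq_of_dense_span hχ_dense ?_
    rintro _ ⟨i, rfl⟩
    rw [integral_map hval.aemeasurable (χ i).continuous.aestronglyMeasurable]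
    by_cases hi : ∀ g, χ i g = 1
    · simp [hi]
    obtain ⟨g, hg⟩ := not_forall.mp hi
    obtain ⟨h, hhH, hh⟩ : ∃ h ∈ H, χ i h ≠ 1 := by
      by_contra! hH1
      exact hg congr($(hH i hH1) g)
    rw [integral_eq_zero_of_map_mul _ (hχ i) hg,
      integral_eq_zero_of_map_mul _ (χ := fun k : K => χ i k) (fun a b => hχ i a b)
        (g := ⟨h, H.le_topologicalClosure hhH⟩) hh]
  rw [dense_iff_closure_eq, ← H.topologicalClosure_coe]
  refine hK.eq_univ_of_forall_integral_eq (ν := ν) (μ := haarMeasure ⊤) ?_ fun f => ?_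
  · rw [map_apply hval hK.isOpen_compl.measurableSet, preimage_compl, Subtype.coe_preimage_self,
      compl_univ, measure_empty]
  · have := hν ((ContinuousMap.mk ((↑) : ℝ → ℂ) Complex.continuous_ofReal).comp f)
    simp only [ContinuousMap.comp_apply, ContinuousMap.coe_mk] at this
    exact_mod_cast this

lemma Circle.exp_two_pi_mul_eq_one_iff {r : ℝ} : Circle.exp (2 * π * r) = 1 ↔ ∃ m : ℤ, r = m := by
  simp only [Circle.exp_eq_one, mul_comm (2 * π), mul_left_inj' two_pi_pos.ne']

section Torus

variable {ι : Type*}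

noncomputable def expTorus (v : ι → ℝ) : ι → Circle := fun j => Circle.exp (2 * π * v j)

lemma expTorus_add (v w : ι → ℝ) : expTorus (v + w) = expTorus v * expTorus w := by
  ext1 j
  simp only [expTorus, Pi.add_apply, Pi.mul_apply, mul_add, Circle.exp_add]

lemma expTorus_neg (v : ι → ℝ) : expTorus (-v) = (expTorus v)⁻¹ := by
  ext1 j
  simp only [expTorus, Pi.neg_apply, Pi.inv_apply, mul_neg, Circle.exp_neg]

lemma expTorus_zero : expTorus (0 : ι → ℝ) = 1 := by
  ext1 j
  simp [expTorus]

variable [Fintype ι]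

noncomputable def torusChar (x : ι → ℤ) : C(ι → Circle, ℂ) where
  toFun z := ∏ j, ((z j ^ x j : Circle) : ℂ)
  continuous_toFun :=
    continuous_finsetProd _ fun j _ => continuous_subtype_val.comp ((continuous_apply j).zpow (x j))

lemma torusChar_apply (x : ι → ℤ) (z : ι → Circle) :
    torusChar x z = ∏ j, ((z j ^ x j : Circle) : ℂ) :=
  rfl

lemma torusChar_mul (x : ι → ℤ) (a b : ι → Circle) :
    torusChar x (a * b) = torusChar x a * torusChar x b := by
  simp only [torusChar_apply, Pi.mul_apply, mul_zpow, Circle.coe_mul, Finset.prod_mul_distrib]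

lemma torusChar_add (x y : ι → ℤ) : torusChar (x + y) = torusChar x * torusChar y := by
  ext z
  simp only [torusChar_apply, ContinuousMap.mul_apply, Pi.add_apply, zpow_add, Circle.coe_mul,
    Finset.prod_mul_distrib]

lemma torusChar_zero : torusChar (0 : ι → ℤ) = 1 := by
  ext z
  simp [torusChar_apply]

lemma star_torusChar (x : ι → ℤ) : star (torusChar x) = torusChar (-x) := by
  ext z
  simp only [torusChar_apply, ContinuousMap.star_apply, star_prod, Pi.neg_apply, zpow_neg,
    Circle.coe_inv_eq_conj, RCLike.star_def]

lemma torusChar_single [DecidableEq ι] (j : ι) (z : ι → Circle) :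
    torusChar (Pi.single j 1) z = z j := by
  rw [torusChar_apply, Finset.prod_eq_single j (fun k _ hk => by simp [Pi.single_eq_of_ne hk])
    (by simp)]
  simp

variable (ι) in
noncomputable def torusCharSubalgebra : StarSubalgebra ℂ C(ι → Circle, ℂ) where
  toSubalgebra := Algebra.adjoin ℂ (range torusChar)
  star_mem' := by
    change Algebra.adjoin ℂ (range torusChar) ≤ star (Algebra.adjoin ℂ (range torusChar))
    refine Algebra.adjoin_le ?_
    rintro _ ⟨x, rfl⟩
    exact Algebra.subset_adjoin ⟨-x, (star_torusChar x).symm⟩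

lemma torusCharSubalgebra_coe :
    (torusCharSubalgebra ι).toSubalgebra.toSubmodule = span ℂ (range torusChar) := by
  apply Algebra.adjoin_eq_span_of_subset
  refine .trans (fun f hf => Submonoid.closure_induction (fun _ => id) ⟨0, torusChar_zero⟩ ?_ hf)
    subset_span
  rintro _ _ _ _ ⟨x, rfl⟩ ⟨y, rfl⟩
  exact ⟨x + y, torusChar_add x y⟩

lemma torusCharSubalgebra_separatesPoints : (torusCharSubalgebra ι).SeparatesPoints := by
  classical
  intro z w hzw
  obtain ⟨j, hj⟩ := Function.ne_iff.mp hzw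
  refine ⟨_, ⟨torusChar (Pi.single j 1), Algebra.subset_adjoin ⟨_, rfl⟩, rfl⟩, ?_⟩
  simp only [torusChar_single]
  exact fun h => hj (Subtype.ext h)

lemma dense_span_torusChar :
    Dense (span ℂ (range (torusChar (ι := ι))) : Set C(ι → Circle, ℂ)) := by
  rw [Submodule.dense_iff_topologicalClosure_eq_top, ← torusCharSubalgebra_coe]
  exact congr_arg (Subalgebra.toSubmodule <| StarSubalgebra.toSubalgebra ·)
    (ContinuousMap.starSubalgebra_topologicalClosure_eq_top_of_separatesPoints _
      torusCharSubalgebra_separatesPoints)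

lemma torusChar_expTorus (x : ι → ℤ) (v : ι → ℝ) :
    torusChar x (expTorus v) = Circle.exp (2 * π * ((fun i => (x i : ℝ)) ⬝ᵥ v)) := by
  simp only [torusChar_apply, expTorus, ← Circle.exp_intCast_mul, Circle.coe_exp,
    ← Complex.exp_sum, dotProduct]
  push_cast
  rw [Finset.mul_sum, Finset.sum_mul]
  exact congrArg Complex.exp (Finset.sum_congr rfl fun j _ => by ring)

lemma torusChar_eq_one_iff {x : ι → ℤ} : torusChar x = 1 ↔ x = 0 := by
  classical
  refine ⟨fun hx => ?_, fun hx => hx ▸ torusChar_zero⟩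
  by_contra! hx0
  obtain ⟨j, hj⟩ := Function.ne_iff.mp hx0
  have := congr($hx (expTorus (Pi.single j (1 / (2 * x j)))))
  rw [torusChar_expTorus, dotProduct_single, ContinuousMap.one_apply, Circle.coe_eq_one] at this
  have hj' : (x j : ℝ) ≠ 0 := by exact_mod_cast hj
  exact Circle.exp_pi_ne_one (by convert this using 2; field_simp)

def Matrix.torusSubgroup (θ : Matrix ι ι ℝ) : Subgroup (ι → Circle) where
  carrier := range fun n : ι → ℤ => expTorus (θ.mulVec fun i => (n i : ℝ))
  mul_mem' := by
    rintro _ _ ⟨m, rfl⟩ ⟨n, rfl⟩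
    exact ⟨m + n, by
      simp only [Pi.add_apply, Int.cast_add, ← Pi.add_def, Matrix.mulVec_add, expTorus_add]⟩
  one_mem' := ⟨0, by
    simp only [Pi.zero_apply, Int.cast_zero, ← Pi.zero_def, Matrix.mulVec_zero, expTorus_zero]⟩
  inv_mem' := by
    rintro _ ⟨n, rfl⟩
    exact ⟨-n, by
      simp only [Pi.neg_apply, Int.cast_neg, ← Pi.neg_def, Matrix.mulVec_neg, expTorus_neg]⟩

lemma Matrix.coe_torusSubgroup (θ : Matrix ι ι ℝ) :
    (θ.torusSubgroup : Set (ι → Circle)) =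
      range fun n : ι → ℤ => expTorus (θ.mulVec fun i => (n i : ℝ)) :=
  rfl

end Torus

theorem stmt_4_general (d : ℕ) (θ : Matrix (Fin d) (Fin d) ℝ) :
    DenseRange (fun n : Fin d → ℤ =>
      (fun j => Circle.exp (2 * Real.pi * θ.mulVec (fun i => (n i : ℝ)) j) : Fin d → Circle)) ↔
    (∀ x : Fin d → ℤ,
      (∀ y : Fin d → ℤ, ∃ m : ℤ,
        dotProduct (fun i => (x i : ℝ)) (θ.mulVec fun i => (y i : ℝ)) = (m : ℝ)) →
      x = 0) := by
  change Dense (θ.torusSubgroup : Set (Fin d → Circle)) ↔ _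
  rw [Subgroup.dense_iff_forall_eq_one torusChar torusChar_mul dense_span_torusChar]
  refine forall_congr' fun x => imp_congr ?_ torusChar_eq_one_iff
  simp only [← SetLike.mem_coe, Matrix.coe_torusSubgroup, forall_mem_range,
    torusChar_expTorus, Circle.coe_eq_one, Circle.exp_two_pi_mul_eq_one_iff]

theorem stmt_4 (d : ℕ) (θ : Matrix (Fin d) (Fin d) ℝ) (hθ : θ.transpose = -θ) :
    DenseRange (fun n : Fin d → ℤ =>
      (fun j => Circle.exp (2 * Real.pi * θ.mulVec (fun i => (n i : ℝ)) j) : Fin d → Circle)) ↔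
    (∀ x : Fin d → ℤ,
      (∀ y : Fin d → ℤ, ∃ m : ℤ,
        dotProduct (fun i => (x i : ℝ)) (θ.mulVec fun i => (y i : ℝ)) = (m : ℝ)) →
      x = 0) :=
  stmt_4_general d θ
end

section
/- Let t be even and let u ∈ M_t(ℂ) be a self-adjoint unitary (u = u*, u² = 1) whose +1-eigenspace has dimension strictly greater than t/2. Let f ∈ M_t(ℂ) be an orthogonal projection of rank t/2. Then ‖u f u* − (1 − f)‖ ≥ 1. -/
/-! A `+1`-eigenvector `ξ` of `u` lying in the range of `f` is fixed by `u f uᴴ - (1 - f)`,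
so that operator has norm at least `1`. Such a `ξ` exists because the two subspaces have
dimensions `t / 2` and more than `t / 2` in a space of dimension `t`. -/

theorem ContinuousLinearMap.one_le_opNorm_of_apply_eq_self {𝕜 E : Type*}
    [NontriviallyNormedField 𝕜] [NormedAddCommGroup E] [NormedSpace 𝕜 E]
    (T : E →L[𝕜] E) {x : E} (hx : x ≠ 0) (hTx : T x = x) : 1 ≤ ‖T‖ := by
  simpa [hTx, div_self (norm_ne_zero_iff.mpr hx)] using T.ratio_le_opNorm x

theorem Submodule.exists_mem_mem_ne_zero_of_finrank_lt_add {K V : Type*} [DivisionRing K]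
    [AddCommGroup V] [Module K V] [FiniteDimensional K V] {s t : Submodule K V}
    (h : Module.finrank K V < Module.finrank K s + Module.finrank K t) :
    ∃ x ∈ s, x ∈ t ∧ x ≠ 0 := by
  have hs : ¬Disjoint s t := fun hst => (finrank_add_finrank_le_of_disjoint hst).not_gt h
  simpa [Submodule.disjoint_def, and_assoc] using hs

namespace Matrix

variable {n R : Type*} [Fintype n]

theorem mulVec_eq_self_of_mem_range [CommSemiring R] {f : Matrix n n R} (hf : f * f = f)
    {x : n → R} (hx : x ∈ LinearMap.range f.mulVecLin) : f *ᵥ x = x := by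
  obtain ⟨y, rfl⟩ := hx
  rw [mulVecLin_apply, mulVec_mulVec, hf]

theorem conj_sub_one_sub_mulVec_eq_self [DecidableEq n] [Ring R] {v w f : Matrix n n R}
    {x : n → R} (hv : v *ᵥ x = x) (hw : w *ᵥ x = x) (hf : f *ᵥ x = x) :
    (v * f * w - (1 - f)) *ᵥ x = x := by
  simp only [sub_mulVec, ← mulVec_mulVec, one_mulVec, hv, hw, hf, sub_self, sub_zero]

end Matrix

theorem stmt_16_general (t : ℕ) (ht : Even t) (u f : Matrix (Fin t) (Fin t) ℂ)
    (hu_sa : u.conjTranspose = u)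
    (heig : t / 2 < Module.finrank ℂ (Module.End.eigenspace (Matrix.toLin' u) 1))
    (hf_proj : f * f = f) (hf_rank : f.rank = t / 2) :
    1 ≤ ‖Matrix.toEuclideanCLM (𝕜 := ℂ) (n := Fin t) (u * f * u.conjTranspose - (1 - f))‖ := by
  have hdim : Module.finrank ℂ (Fin t → ℂ) <
      Module.finrank ℂ (LinearMap.range f.mulVecLin) +
        Module.finrank ℂ (Module.End.eigenspace (Matrix.toLin' u) 1) := by
    rw [Module.finrank_fin_fun, ← Matrix.rank, hf_rank]
    obtain ⟨k, rfl⟩ := ht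
    omega
  obtain ⟨ξ, hξf, hξu, hξ⟩ := Submodule.exists_mem_mem_ne_zero_of_finrank_lt_add hdim
  have hfξ : f.mulVec ξ = ξ := Matrix.mulVec_eq_self_of_mem_range hf_proj hξf
  have huξ : u.mulVec ξ = ξ := by simpa using Module.End.mem_eigenspace_iff.mp hξu
  refine ContinuousLinearMap.one_le_opNorm_of_apply_eq_self _ (x := WithLp.toLp 2 ξ)
    (by simpa using hξ) ?_
  rw [Matrix.toEuclideanCLM_toLp, hu_sa, Matrix.conj_sub_one_sub_mulVec_eq_self huξ huξ hfξ]

theorem stmt_16 (t : ℕ) (ht : Even t) (u f : Matrix (Fin t) (Fin t) ℂ)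
    (hu_sa : u.conjTranspose = u) (hu_unit : u * u = 1)
    (heig : t / 2 < Module.finrank ℂ (Module.End.eigenspace (Matrix.toLin' u) 1))
    (hf_proj : f * f = f) (hf_sa : f.conjTranspose = f) (hf_rank : f.rank = t / 2) :
    1 ≤ ‖Matrix.toEuclideanCLM (𝕜 := ℂ) (n := Fin t) (u * f * u.conjTranspose - (1 - f))‖ :=
  stmt_16_general t ht u f hu_sa heig hf_proj hf_rank
end

section
/- Let A be a C*-algebra, let N ∈ ℕ, and let e₀, …, e_N ∈ A be mutually orthogonal projections with e₀ + ⋯ + e_N = 1. Let δ > 0, and let s ∈ A satisfy ‖e_j s − s e_j‖ ≤ δ for all j. Then ‖s − ∑_{j=0}^N e_j s e_j‖ ≤ N(N+1)δ, and each element ∑_j e_j s e_j commutes with every e_j. -/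
theorem stmt_19 (A : Type*) [NormedRing A] [StarRing A] [CStarRing A]
    (N : ℕ) (e : Fin (N + 1) → A)
    (he_idem : ∀ j, e j * e j = e j) (he_sa : ∀ j, star (e j) = e j)
    (he_orth : ∀ j k, j ≠ k → e j * e k = 0)
    (he_sum : ∑ j, e j = 1)
    (δ : ℝ) (hδ : 0 < δ) (s : A) (hs : ∀ j, ‖e j * s - s * e j‖ ≤ δ) :
    ‖s - ∑ j, e j * s * e j‖ ≤ (N : ℝ) * (N + 1) * δ ∧
    ∀ j, (∑ k, e k * s * e k) * e j = e j * ∑ k, e k * s * e k := by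
  have hnorm : ∀ j, ‖e j‖ ≤ 1 := by
    intro j
    have h := CStarRing.norm_star_mul_self (x := e j)
    rw [he_sa, he_idem] at h
    nlinarith [norm_nonneg (e j)]
  constructor
  · have h1 : ∑ j, ∑ k, e j * s * e k = s := by
      have hrow : ∀ j, ∑ k, e j * s * e k = e j * s := by
        intro j
        rw [← Finset.mul_sum, he_sum, mul_one]
      calc ∑ j, ∑ k, e j * s * e k = ∑ j, e j * s := by
            exact Finset.sum_congr rfl fun j _ => hrow j
        _ = (∑ j, e j) * s := (Finset.sum_mul _ _ _).symm
        _ = s := by rw [he_sum, one_mul]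
    have key : s - ∑ j, e j * s * e j
        = ∑ j, ∑ k ∈ Finset.univ.erase j, e j * s * e k := by
      nth_rewrite 1 [← h1]
      rw [← Finset.sum_sub_distrib (f := fun j => ∑ k, e j * s * e k)
        (g := fun j => e j * s * e j)]
      refine Finset.sum_congr rfl fun j _ => ?_
      exact (Finset.sum_erase_eq_sub (Finset.mem_univ j)).symm
    rw [key]
    have hterm : ∀ j k : Fin (N + 1), k ≠ j → ‖e j * s * e k‖ ≤ δ := by
      intro j k hkj
      have h0 : e j * (e k * s) = 0 := by
        rw [← mul_assoc, he_orth j k (Ne.symm hkj), zero_mul]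
      have heq : e j * s * e k = e j * (s * e k - e k * s) := by
        rw [mul_sub, h0, sub_zero, mul_assoc]
      rw [heq]
      calc ‖e j * (s * e k - e k * s)‖ ≤ ‖e j‖ * ‖s * e k - e k * s‖ :=
            norm_mul_le _ _
        _ ≤ 1 * δ := by
            apply mul_le_mul (hnorm j) ?_ (norm_nonneg _) zero_le_one
            rw [norm_sub_rev]; exact hs k
        _ = δ := one_mul δ
    calc ‖∑ j, ∑ k ∈ Finset.univ.erase j, e j * s * e k‖
        ≤ ∑ j, ‖∑ k ∈ Finset.univ.erase j, e j * s * e k‖ := norm_sum_le _ _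
      _ ≤ ∑ j : Fin (N + 1), (N : ℝ) * δ := by
          refine Finset.sum_le_sum fun j _ => ?_
          calc ‖∑ k ∈ Finset.univ.erase j, e j * s * e k‖
              ≤ ∑ k ∈ Finset.univ.erase j, ‖e j * s * e k‖ := norm_sum_le _ _
            _ ≤ ∑ _k ∈ Finset.univ.erase j, δ :=
                Finset.sum_le_sum fun k hk =>
                  hterm j k (Finset.ne_of_mem_erase hk)
            _ = (N : ℝ) * δ := by
                rw [Finset.sum_const, Finset.card_erase_of_mem (Finset.mem_univ j)]
                simp [mul_comm]
      _ = (N : ℝ) * (N + 1) * δ := by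
          rw [Finset.sum_const]
          simp [Finset.card_univ]
          ring
  · intro j
    have hL : (∑ k, e k * s * e k) * e j = e j * s * e j := by
      rw [Finset.sum_mul]
      rw [Finset.sum_eq_single j]
      · rw [mul_assoc, mul_assoc, he_idem, ← mul_assoc]
      · intro k _ hkj
        rw [mul_assoc, mul_assoc, he_orth k j hkj, mul_zero, mul_zero]
      · exact fun h => absurd (Finset.mem_univ j) h
    have hR : e j * ∑ k, e k * s * e k = e j * s * e j := by
      rw [Finset.mul_sum]
      rw [Finset.sum_eq_single j]
      · rw [← mul_assoc, ← mul_assoc, he_idem]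
      · intro k _ hkj
        rw [← mul_assoc, ← mul_assoc, he_orth j k (Ne.symm hkj), zero_mul, zero_mul]
      · exact fun h => absurd (Finset.mem_univ j) h
    rw [hL, hR]
end
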